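/- For each i∈I, every element a of U_q^-(g) can be written uniquely as a finite sum a = Σ_{n≥0} f_i^{(n)} a_n where a_n∈U_q^-(g), e_i' a_n = 0 for all n, and a_n = 0 for all but finitely many n. -/

import Mathlib

noncomputable section
open scoped BigOperators

abbrev KK : Type := RatFunc ℚ

def qq : KK := RatFunc.X

def qZ (n : ℤ) : KK := qq ^ n

def qInt (d : ℤ) (k : ℕ) : KK := (qq ^ (d * k) - qq ^ (-(d * k : ℤ))) / (qq ^ d - qq ^ (-d : ℤ))

def qFact (d : ℤ) (k : ℕ) : KK := ∏ m ∈ Finset.range k, qInt d (m + 1)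

variable {I : Type} [DecidableEq I]

/-- `b = 1 - (α_i^∨, α_j)` -/
def serreN (A : I → I → ℤ) (i j : I) : ℕ := (1 - 2 * A i j / A i i).toNat

def fSerre (A : I → I → ℤ) (i j : I) : FreeAlgebra KK I :=
  ∑ k ∈ Finset.range (serreN A i j + 1),
    ((-1 : KK) ^ k * (qFact (A i i / 2) k)⁻¹ * (qFact (A i i / 2) (serreN A i j - k))⁻¹) •
      ((FreeAlgebra.ι KK i) ^ k * FreeAlgebra.ι KK j * (FreeAlgebra.ι KK i) ^ (serreN A i j - k))

inductive SerreRel (A : I → I → ℤ) : FreeAlgebra KK I → FreeAlgebra KK I → Prop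
  | serre (i j : I) (h : i ≠ j) : SerreRel A (fSerre A i j) 0

abbrev Um (A : I → I → ℤ) : Type := RingQuot (SerreRel A)

def fgen (A : I → I → ℤ) (i : I) : Um A := RingQuot.mkAlgHom KK (SerreRel A) (FreeAlgebra.ι KK i)

def IsWt (A : I → I → ℤ) (ν : I →₀ ℕ) (a : Um A) : Prop :=
  a ∈ Submodule.span KK {x | ∃ L : List I, (∀ i, L.count i = ν i) ∧ x = (L.map (fgen A)).prod}

def IsCartan (A : I → I → ℤ) : Prop :=
  (∀ i j, A i j = A j i) ∧ (∀ i, 0 < A i i) ∧ (∀ i, 2 ∣ A i i) ∧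
  (∀ i j, i ≠ j → A i j ≤ 0) ∧ (∀ i j, A i i ∣ 2 * A i j)

def EprimRel (A : I → I → ℤ) (E : I → Module.End KK (Um A)) : Prop :=
  (∀ i, E i 1 = 0) ∧
  ∀ i j (a : Um A), E i (fgen A j * a) =
    (if i = j then a else 0) + qZ (-(A i j)) • (fgen A j * (E i a))

def fdiv (A : I → I → ℤ) (i : I) (n : ℕ) : Um A :=
  (qFact (A i i / 2) n)⁻¹ • (fgen A i) ^ n

/-!
On `ker E_i` the operator `E_i` lowers divided powers: by the defining relation of `E_i`,
`E_i (f_i^{(n+1)} a) = c_n f_i^{(n)} a` with `c_n = (1 + q_i^{-2} + ⋯ + q_i^{-2n}) / [n+1]_i ≠ 0`.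
Moreover `E_i` is locally nilpotent, since `E_i^m a = 0` forces `E_i^{m+1} (f_j a) = 0` and the
`f_j` generate. For any such pair of a locally nilpotent lowering operator and raising operators,
a decomposition `v = ∑ F_n b_n` with `b_n ∈ ker E` exists by splitting off the top term
`F_N (E^N v)` (suitably scaled) and is unique because `E^N` kills every `F_n b_n` with `n < N`
and rescales `F_N b_N` to a nonzero multiple of `b_N`.
-/

open Finset

theorem intDegree_qZ (n : ℤ) : (qZ n).intDegree = n := by
  have hnat (m : ℕ) : (qq ^ m).intDegree = m := by
    rw [qq, ← RatFunc.algebraMap_X, ← map_pow, RatFunc.intDegree_polynomial,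
      Polynomial.natDegree_X_pow]
  obtain ⟨m, rfl | rfl⟩ := Int.eq_nat_or_neg n
  · rw [qZ, zpow_natCast, hnat]
  · rw [qZ, zpow_neg, zpow_natCast, RatFunc.intDegree_inv, hnat]

theorem qZ_injective : Function.Injective qZ := fun a b h => by
  rw [← intDegree_qZ a, h, intDegree_qZ]

theorem qInt_ne_zero {d : ℤ} (hd : d ≠ 0) {k : ℕ} (hk : k ≠ 0) : qInt d k ≠ 0 := by
  have hdk : d * k ≠ 0 := mul_ne_zero hd (Int.natCast_ne_zero.mpr hk)
  exact div_ne_zero (sub_ne_zero.mpr (qZ_injective.ne (by omega)))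
    (sub_ne_zero.mpr (qZ_injective.ne (by omega)))

theorem geom_sum_qZ_ne_zero {d : ℤ} (hd : d ≠ 0) {n : ℕ} (hn : n ≠ 0) :
    ∑ k ∈ range n, qZ d ^ k ≠ 0 := by
  have hpow (m : ℕ) : qZ d ^ m = qZ (d * m) := by rw [qZ, qZ, zpow_mul, zpow_natCast]
  have hne_one (m : ℕ) (hm : m ≠ 0) : qZ d ^ m ≠ 1 := by
    rw [hpow, ← zpow_zero qq]
    exact qZ_injective.ne (mul_ne_zero hd (Int.natCast_ne_zero.mpr hm))
  have hq : qZ d ≠ 1 := by simpa using hne_one 1 one_ne_zero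
  rw [geom_sum_eq hq]
  exact div_ne_zero (sub_ne_zero.mpr (hne_one n hn)) (sub_ne_zero.mpr hq)

section Lowering

variable {K M : Type*} [Field K] [AddCommGroup M] [Module K M]
  {E : Module.End K M} {F : ℕ → Module.End K M} {c : ℕ → K}

theorem pow_apply_raise_self (hF0 : ∀ a, F 0 a = a)
    (hEF : ∀ n a, E a = 0 → E (F (n + 1) a) = c n • F n a) {a : M} (ha : E a = 0) (n : ℕ) :
    (E ^ n) (F n a) = (∏ j ∈ range n, c j) • a := by
  induction n with
  | zero => simp [hF0]
  | succ n ih =>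
    rw [pow_succ, Module.End.mul_apply, hEF n a ha, map_smul, ih, smul_smul, prod_range_succ,
      mul_comm]

theorem pow_apply_raise_of_lt (hF0 : ∀ a, F 0 a = a)
    (hEF : ∀ n a, E a = 0 → E (F (n + 1) a) = c n • F n a) {a : M} (ha : E a = 0) {n N : ℕ}
    (h : n < N) : (E ^ N) (F n a) = 0 := by
  rw [show N = (N - n - 1) + 1 + n by omega, pow_add, pow_add, pow_one, Module.End.mul_apply,
    Module.End.mul_apply, pow_apply_raise_self hF0 hEF ha, map_smul, ha, smul_zero, map_zero]

theorem eq_zero_of_sum_raise_eq_zero (hF0 : ∀ a, F 0 a = a)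
    (hEF : ∀ n a, E a = 0 → E (F (n + 1) a) = c n • F n a) (hc : ∀ n, c n ≠ 0)
    {b : ℕ →₀ M} (hb : ∀ n, E (b n) = 0) (hsum : (b.sum fun n x => F n x) = 0) : b = 0 := by
  by_contra hne
  have hsupp : b.support.Nonempty := Finsupp.support_nonempty_iff.mpr hne
  set N := b.support.max' hsupp
  have htop : (E ^ N) (b.sum fun n x => F n x) = (∏ j ∈ range N, c j) • b N := by
    rw [map_finsuppSum, Finsupp.sum, sum_eq_single N]
    · exact pow_apply_raise_self hF0 hEF (hb N) N
    · intro n hn hnN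
      exact pow_apply_raise_of_lt hF0 hEF (hb n) (lt_of_le_of_ne (b.support.le_max' n hn) hnN)
    · intro hN
      rw [Finsupp.notMem_support_iff.mp hN, map_zero, map_zero]
  rw [hsum, map_zero, eq_comm, smul_eq_zero] at htop
  exact Finsupp.mem_support_iff.mp (b.support.max'_mem hsupp)
    (htop.resolve_left (prod_ne_zero_iff.mpr fun j _ => hc j))

theorem exists_eq_sum_raise_of_pow_apply_eq_zero (hF0 : ∀ a, F 0 a = a)
    (hEF : ∀ n a, E a = 0 → E (F (n + 1) a) = c n • F n a) (hc : ∀ n, c n ≠ 0) (N : ℕ) {v : M}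
    (hv : (E ^ N) v = 0) :
    ∃ b : ℕ →₀ M, (∀ n, E (b n) = 0) ∧ v = b.sum fun n x => F n x := by
  induction N generalizing v with
  | zero => exact ⟨0, fun _ => map_zero E, by simpa using hv⟩
  | succ N ih =>
    -- `u` is the coefficient of the top term `F N u` of `v`
    set u := (∏ j ∈ range N, c j)⁻¹ • (E ^ N) v
    have hu : E u = 0 := by
      rw [map_smul, ← Module.End.mul_apply, ← pow_succ', hv, smul_zero]
    have hrest : (E ^ N) (v - F N u) = 0 := by
      rw [map_sub, pow_apply_raise_self hF0 hEF hu, smul_smul,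
        mul_inv_cancel₀ (prod_ne_zero_iff.mpr fun j _ => hc j), one_smul, sub_self]
    obtain ⟨b, hb, hsum⟩ := ih hrest
    refine ⟨b + Finsupp.single N u, fun n => ?_, ?_⟩
    · rw [Finsupp.add_apply, map_add, hb, Finsupp.single_apply]
      split_ifs <;> simp [hu]
    · rw [Finsupp.sum_add_index' (fun n => map_zero (F n)) (fun n => map_add (F n)),
        Finsupp.sum_single_index (h := fun n => ⇑(F n)) (map_zero (F N)), ← hsum, sub_add_cancel]

theorem existsUnique_eq_sum_raise (hF0 : ∀ a, F 0 a = a)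
    (hEF : ∀ n a, E a = 0 → E (F (n + 1) a) = c n • F n a) (hc : ∀ n, c n ≠ 0)
    (hnil : ∀ v, ∃ N, (E ^ N) v = 0) (v : M) :
    ∃! b : ℕ →₀ M, (∀ n, E (b n) = 0) ∧ v = b.sum fun n x => F n x := by
  obtain ⟨N, hN⟩ := hnil v
  obtain ⟨b, hb, hsum⟩ := exists_eq_sum_raise_of_pow_apply_eq_zero hF0 hEF hc N hN
  refine ⟨b, ⟨hb, hsum⟩, fun b' ⟨hb', hsum'⟩ => sub_eq_zero.mp ?_⟩
  refine eq_zero_of_sum_raise_eq_zero hF0 hEF hc (fun n => ?_) ?_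
  · rw [Finsupp.sub_apply, map_sub, hb, hb', sub_self]
  · rw [Finsupp.sum_sub_index (fun n => map_sub (F n)), ← hsum, ← hsum', sub_self]

end Lowering

section Um

variable {A : I → I → ℤ} {E : I → Module.End KK (Um A)}

theorem EprimRel.pow_succ_apply_fgen_mul_eq_zero (hE : EprimRel A E) (i j : I) {m : ℕ} {a : Um A}
    (ha : (E i ^ m) a = 0) : (E i ^ (m + 1)) (fgen A j * a) = 0 := by
  induction m generalizing a with
  | zero => rw [pow_zero, Module.End.one_apply] at ha; rw [ha, mul_zero, map_zero]
  | succ m ih =>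
    rw [pow_succ, Module.End.mul_apply, hE.2, map_add, map_smul,
      ih (by rwa [← Module.End.mul_apply, ← pow_succ]), smul_zero, add_zero]
    split_ifs
    · exact ha
    · exact map_zero _

theorem EprimRel.exists_pow_apply_eq_zero (hE : EprimRel A E) (i : I) (a : Um A) :
    ∃ N, (E i ^ N) a = 0 := by
  suffices h : ∀ (x : FreeAlgebra KK I) (b : Um A), (∃ N, (E i ^ N) b = 0) →
      ∃ N, (E i ^ N) (RingQuot.mkAlgHom KK (SerreRel A) x * b) = 0 by
    obtain ⟨x, rfl⟩ := RingQuot.mkAlgHom_surjective KK (SerreRel A) a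
    simpa using h x 1 ⟨1, by simpa using hE.1 i⟩
  intro x
  induction x using FreeAlgebra.induction with
  | grade0 r =>
    rintro b ⟨N, hN⟩
    exact ⟨N, by rw [AlgHom.commutes, ← Algebra.smul_def, map_smul, hN, smul_zero]⟩
  | grade1 j =>
    rintro b ⟨N, hN⟩
    exact ⟨N + 1, hE.pow_succ_apply_fgen_mul_eq_zero i j hN⟩
  | mul x y hx hy =>
    intro b hb
    rw [map_mul, mul_assoc]
    exact hx _ (hy b hb)
  | add x y hx hy =>
    intro b hb
    obtain ⟨M, hM⟩ := hx b hb
    obtain ⟨N, hN⟩ := hy b hb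
    refine ⟨max M N, ?_⟩
    rw [map_add, add_mul, map_add, Module.End.pow_map_zero_of_le (le_max_left M N) hM,
      Module.End.pow_map_zero_of_le (le_max_right M N) hN, add_zero]

theorem EprimRel.apply_fgen_pow_succ_mul (hE : EprimRel A E) (i : I) {a : Um A} (ha : E i a = 0)
    (n : ℕ) :
    E i (fgen A i ^ (n + 1) * a) = (∑ k ∈ range (n + 1), qZ (-A i i) ^ k) • (fgen A i ^ n * a) := by
  induction n with
  | zero => simp [hE.2 i i a, ha]
  | succ n ih =>
    rw [pow_succ', mul_assoc, hE.2, if_pos rfl, ih, mul_smul_comm, smul_smul, ← mul_assoc,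
      ← pow_succ', geom_sum_succ (n := n + 1), add_smul, one_smul, add_comm]

theorem EprimRel.apply_fdiv_succ_mul (hE : EprimRel A E) (i : I) {a : Um A} (ha : E i a = 0) (n : ℕ) :
    E i (fdiv A i (n + 1) * a) =
      ((∑ k ∈ range (n + 1), qZ (-A i i) ^ k) / qInt (A i i / 2) (n + 1)) • (fdiv A i n * a) := by
  rw [fdiv, fdiv, smul_mul_assoc, smul_mul_assoc, map_smul, hE.apply_fgen_pow_succ_mul i ha,
    smul_smul, smul_smul, qFact, prod_range_succ, ← qFact, mul_inv]
  congr 1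
  ring

end Um

theorem stmt3 (A : I → I → ℤ) (hA : IsCartan A)
    (E : I → Module.End KK (Um A)) (hE : EprimRel A E) :
    ∀ (i : I) (a : Um A),
      ∃! c : ℕ →₀ Um A,
        (∀ n : ℕ, E i (c n) = 0) ∧ a = c.sum fun n x => fdiv A i n * x := by
  intro i a
  obtain ⟨-, hpos, hdvd, -⟩ := hA
  have hd : A i i / 2 ≠ 0 := by
    have := hpos i
    have := hdvd i
    omega
  exact existsUnique_eq_sum_raise (F := fun n => LinearMap.mulLeft KK (fdiv A i n))
    (fun b => by simp [fdiv, qFact]) (fun n b hb => hE.apply_fdiv_succ_mul i hb n)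
    (fun n => div_ne_zero (geom_sum_qZ_ne_zero (by omega) n.succ_ne_zero)
      (qInt_ne_zero hd n.succ_ne_zero)) (hE.exists_pow_apply_eq_zero i) a
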